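/- arXiv:1411.2603 — 2 statements merged into one kernel-verified Lean document; each statement's English description precedes it below -/
import Mathlib

section
/- For smooth functions f : ℝ^d → ℝ, with K_{Δ,μ} f = 2x_μ(x·∇f + Δf) − |x|² ∂_μ f, the commutator of the Laplacian with K_{Δ,μ} satisfies [Δ_Lap, K_{Δ,μ}] f = 4(Δ − (d−2)/2) ∂_μ f + 4 x_μ Δ_Lap f. -/
open MeasureTheory

/-- Partial derivative in coordinate direction `μ`. -/
noncomputable def pd {d : ℕ} (μ : Fin d) (f : (Fin d → ℝ) → ℝ) : (Fin d → ℝ) → ℝ :=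
  fun x => fderiv ℝ f x (Pi.single μ 1)

/-- Dilatation operator `D_Δ f = x·∇f + Δ f`. -/
noncomputable def dilOp {d : ℕ} (Δ : ℝ) (f : (Fin d → ℝ) → ℝ) : (Fin d → ℝ) → ℝ :=
  fun x => (∑ ν, x ν * pd ν f x) + Δ * f x

/-- Special conformal operator `K_{Δ,μ} f = 2 x_μ (x·∇f + Δ f) - |x|² ∂_μ f`. -/
noncomputable def sctOp {d : ℕ} (Δ : ℝ) (μ : Fin d) (f : (Fin d → ℝ) → ℝ) : (Fin d → ℝ) → ℝ :=
  fun x => 2 * x μ * ((∑ ν, x ν * pd ν f x) + Δ * f x) - (∑ ν, (x ν) ^ 2) * pd μ f x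

/-- Euclidean Laplacian. -/
noncomputable def lap {d : ℕ} (f : (Fin d → ℝ) → ℝ) : (Fin d → ℝ) → ℝ :=
  fun x => ∑ μ, pd μ (pd μ f) x

/-- Rotation generator `L_{μν} f = x_μ ∂_ν f - x_ν ∂_μ f`. -/
noncomputable def rotOp {d : ℕ} (μ ν : Fin d) (f : (Fin d → ℝ) → ℝ) : (Fin d → ℝ) → ℝ :=
  fun x => x μ * pd ν f x - x ν * pd μ f x

/-- Kronecker delta. -/
noncomputable def kd {d : ℕ} (μ ν : Fin d) : ℝ := if μ = ν then 1 else 0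

section tools
variable {d : ℕ}

lemma contDiff_pd (μ : Fin d) {f : (Fin d → ℝ) → ℝ} (hf : ContDiff ℝ (⊤ : ℕ∞) f) :
    ContDiff ℝ (⊤ : ℕ∞) (pd μ f) := by
  have h1 : ContDiff ℝ (⊤ : ℕ∞) (fderiv ℝ f) := hf.fderiv_right (by simp)
  exact h1.clm_apply contDiff_const

lemma smooth_diff {f : (Fin d → ℝ) → ℝ} (hf : ContDiff ℝ (⊤ : ℕ∞) f) : Differentiable ℝ f :=
  hf.differentiable (by simp)

lemma pd_add {f g : (Fin d → ℝ) → ℝ} (hf : Differentiable ℝ f) (hg : Differentiable ℝ g)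
    (μ : Fin d) : pd μ (fun x => f x + g x) = fun x => pd μ f x + pd μ g x := by
  funext x
  simp only [pd, fderiv_fun_add (hf x) (hg x), ContinuousLinearMap.add_apply]

lemma pd_sub {f g : (Fin d → ℝ) → ℝ} (hf : Differentiable ℝ f) (hg : Differentiable ℝ g)
    (μ : Fin d) : pd μ (fun x => f x - g x) = fun x => pd μ f x - pd μ g x := by
  funext x
  simp only [pd, fderiv_fun_sub (hf x) (hg x), ContinuousLinearMap.sub_apply]

lemma pd_const_mul {f : (Fin d → ℝ) → ℝ} (hf : Differentiable ℝ f) (c : ℝ)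
    (μ : Fin d) : pd μ (fun x => c * f x) = fun x => c * pd μ f x := by
  funext x
  simp [pd, fderiv_const_mul (hf x) c]

lemma pd_mul {f g : (Fin d → ℝ) → ℝ} (hf : Differentiable ℝ f) (hg : Differentiable ℝ g)
    (μ : Fin d) : pd μ (fun x => f x * g x) = fun x => pd μ f x * g x + f x * pd μ g x := by
  funext x
  simp only [pd, fderiv_fun_mul (hf x) (hg x), ContinuousLinearMap.add_apply,
    ContinuousLinearMap.smul_apply, smul_eq_mul]
  ring

lemma pd_sum {ι : Type*} (s : Finset ι) {F : ι → (Fin d → ℝ) → ℝ}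
    (hF : ∀ i ∈ s, Differentiable ℝ (F i)) (μ : Fin d) :
    pd μ (fun x => ∑ i ∈ s, F i x) = fun x => ∑ i ∈ s, pd μ (F i) x := by
  funext x
  simp only [pd, fderiv_fun_sum (fun i hi => (hF i hi) x), ContinuousLinearMap.sum_apply]

lemma contDiff_coord (ν : Fin d) : ContDiff ℝ (⊤ : ℕ∞) (fun x : Fin d → ℝ => x ν) := by
  have : (fun x : Fin d → ℝ => x ν) = (ContinuousLinearMap.proj ν : (Fin d → ℝ) →L[ℝ] ℝ) := rfl
  rw [this]; exact (ContinuousLinearMap.proj ν : (Fin d → ℝ) →L[ℝ] ℝ).contDiff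

lemma pd_coord (ν μ : Fin d) :
    pd μ (fun x : Fin d → ℝ => x ν) = fun _ => if μ = ν then (1:ℝ) else 0 := by
  funext x
  have : (fun x : Fin d → ℝ => x ν) = (ContinuousLinearMap.proj ν : (Fin d → ℝ) →L[ℝ] ℝ) := rfl
  simp [pd, this, ContinuousLinearMap.fderiv, Pi.single_apply, eq_comm]

lemma pd_const (c : ℝ) (μ : Fin d) : pd μ (fun _ : Fin d → ℝ => c) = fun _ => 0 := by
  funext x
  simp [pd]

lemma pd_comm {f : (Fin d → ℝ) → ℝ} (hf : ContDiff ℝ (⊤ : ℕ∞) f) (a b : Fin d) :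
    pd a (pd b f) = pd b (pd a f) := by
  funext x
  have hd : DifferentiableAt ℝ (fderiv ℝ f) x :=
    (hf.fderiv_right (m := (⊤ : ℕ∞)) (by simp)).differentiable (by simp) x
  have hsymm : IsSymmSndFDerivAt ℝ f x := hf.contDiffAt.isSymmSndFDerivAt (by rw [minSmoothness_of_isRCLikeNormedField]; exact WithTop.coe_le_coe.mpr le_top)
  have h1 : ∀ (v w : Fin d → ℝ),
      fderiv ℝ (fun y => fderiv ℝ f y w) x v = fderiv ℝ (fderiv ℝ f) x v w := by
    intro v w
    rw [fderiv_clm_apply hd (differentiableAt_const w)]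
    simp
  show fderiv ℝ (fun y => fderiv ℝ f y (Pi.single b 1)) x (Pi.single a 1)
      = fderiv ℝ (fun y => fderiv ℝ f y (Pi.single a 1)) x (Pi.single b 1)
  rw [h1, h1]
  exact hsymm _ _

lemma lap_mul {f g : (Fin d → ℝ) → ℝ} (hf : ContDiff ℝ (⊤ : ℕ∞) f) (hg : ContDiff ℝ (⊤ : ℕ∞) g)
    (x : Fin d → ℝ) :
    lap (fun x => f x * g x) x
      = lap f x * g x + 2 * (∑ ρ, pd ρ f x * pd ρ g x) + f x * lap g x := by
  have hfd := smooth_diff hf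
  have hgd := smooth_diff hg
  have hpf : ∀ ρ : Fin d, Differentiable ℝ (pd ρ f) := fun ρ => smooth_diff (contDiff_pd ρ hf)
  have hpg : ∀ ρ : Fin d, Differentiable ℝ (pd ρ g) := fun ρ => smooth_diff (contDiff_pd ρ hg)
  have key : ∀ ρ : Fin d, pd ρ (pd ρ (fun x => f x * g x)) x
      = pd ρ (pd ρ f) x * g x + pd ρ f x * pd ρ g x
        + (pd ρ f x * pd ρ g x + f x * pd ρ (pd ρ g) x) := by
    intro ρ
    rw [pd_mul hfd hgd, pd_add ((hpf ρ).fun_mul hgd) (hfd.fun_mul (hpg ρ)),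
      pd_mul (hpf ρ) hgd, pd_mul hfd (hpg ρ)]
  show (∑ ρ, pd ρ (pd ρ (fun x => f x * g x)) x) = _
  rw [Finset.sum_congr rfl (fun ρ _ => key ρ)]
  simp only [Finset.sum_add_distrib, ← Finset.sum_mul, ← Finset.mul_sum]
  show lap f x * g x + _ + (_ + f x * lap g x) = _
  ring

lemma lap_sub {f g : (Fin d → ℝ) → ℝ} (hf : ContDiff ℝ (⊤ : ℕ∞) f) (hg : ContDiff ℝ (⊤ : ℕ∞) g)
    (x : Fin d → ℝ) :
    lap (fun x => f x - g x) x = lap f x - lap g x := by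
  have key : ∀ ρ : Fin d, pd ρ (pd ρ (fun x => f x - g x)) x
      = pd ρ (pd ρ f) x - pd ρ (pd ρ g) x := by
    intro ρ
    rw [pd_sub (smooth_diff hf) (smooth_diff hg),
      pd_sub (smooth_diff (contDiff_pd ρ hf)) (smooth_diff (contDiff_pd ρ hg))]
  show (∑ ρ, pd ρ (pd ρ (fun x => f x - g x)) x) = _
  rw [Finset.sum_congr rfl (fun ρ _ => key ρ), Finset.sum_sub_distrib]
  rfl

lemma lap_add {f g : (Fin d → ℝ) → ℝ} (hf : ContDiff ℝ (⊤ : ℕ∞) f) (hg : ContDiff ℝ (⊤ : ℕ∞) g)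
    (x : Fin d → ℝ) :
    lap (fun x => f x + g x) x = lap f x + lap g x := by
  have key : ∀ ρ : Fin d, pd ρ (pd ρ (fun x => f x + g x)) x
      = pd ρ (pd ρ f) x + pd ρ (pd ρ g) x := by
    intro ρ
    rw [pd_add (smooth_diff hf) (smooth_diff hg),
      pd_add (smooth_diff (contDiff_pd ρ hf)) (smooth_diff (contDiff_pd ρ hg))]
  show (∑ ρ, pd ρ (pd ρ (fun x => f x + g x)) x) = _
  rw [Finset.sum_congr rfl (fun ρ _ => key ρ), Finset.sum_add_distrib]
  rfl

lemma lap_const_mul {f : (Fin d → ℝ) → ℝ} (hf : ContDiff ℝ (⊤ : ℕ∞) f) (c : ℝ)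
    (x : Fin d → ℝ) : lap (fun x => c * f x) x = c * lap f x := by
  have key : ∀ ρ : Fin d, pd ρ (pd ρ (fun x => c * f x)) x = c * pd ρ (pd ρ f) x := by
    intro ρ
    rw [pd_const_mul (smooth_diff hf), pd_const_mul (smooth_diff (contDiff_pd ρ hf))]
  show (∑ ρ, pd ρ (pd ρ (fun x => c * f x)) x) = _
  rw [Finset.sum_congr rfl (fun ρ _ => key ρ), ← Finset.mul_sum]
  rfl

lemma lap_sum {ι : Type*} (s : Finset ι) {F : ι → (Fin d → ℝ) → ℝ}
    (hF : ∀ i ∈ s, ContDiff ℝ (⊤ : ℕ∞) (F i)) (x : Fin d → ℝ) :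
    lap (fun x => ∑ i ∈ s, F i x) x = ∑ i ∈ s, lap (F i) x := by
  have key : ∀ ρ : Fin d, pd ρ (pd ρ (fun x => ∑ i ∈ s, F i x)) x
      = ∑ i ∈ s, pd ρ (pd ρ (F i)) x := by
    intro ρ
    rw [pd_sum s (fun i hi => smooth_diff (hF i hi)),
      pd_sum s (fun i hi => smooth_diff (contDiff_pd ρ (hF i hi)))]
  show (∑ ρ, pd ρ (pd ρ (fun x => ∑ i ∈ s, F i x)) x) = _
  rw [Finset.sum_congr rfl (fun ρ _ => key ρ), Finset.sum_comm]
  rfl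

lemma lap_coord (ν : Fin d) (x : Fin d → ℝ) : lap (fun y : Fin d → ℝ => y ν) x = 0 := by
  have key : ∀ ρ : Fin d, pd ρ (pd ρ (fun y : Fin d → ℝ => y ν)) x = 0 := by
    intro ρ
    rw [pd_coord, pd_const]
  show (∑ ρ, pd ρ (pd ρ (fun y : Fin d → ℝ => y ν)) x) = 0
  rw [Finset.sum_congr rfl (fun ρ _ => key ρ), Finset.sum_const, smul_zero]

lemma lap_pd_comm {f : (Fin d → ℝ) → ℝ} (hf : ContDiff ℝ (⊤ : ℕ∞) f) (ν : Fin d) :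
    lap (pd ν f) = pd ν (lap f) := by
  funext x
  have key : ∀ ρ : Fin d, pd ρ (pd ρ (pd ν f)) = pd ν (pd ρ (pd ρ f)) := by
    intro ρ
    rw [pd_comm hf ρ ν, pd_comm (contDiff_pd ρ hf) ρ ν]
  show (∑ ρ, pd ρ (pd ρ (pd ν f)) x) = _
  rw [Finset.sum_congr rfl (fun ρ _ => congrFun (key ρ) x)]
  have h2 : pd ν (lap f) = fun x => ∑ ρ, pd ν (pd ρ (pd ρ f)) x := by
    show pd ν (fun y => ∑ ρ, pd ρ (pd ρ f) y) = _
    exact pd_sum Finset.univ (fun ρ _ => smooth_diff (contDiff_pd ρ (contDiff_pd ρ hf))) ν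
  rw [h2]

end tools

/-- [Δ_Lap, K_{Δ,μ}] f = 4(Δ − (d−2)/2) ∂_μ f + 4 x_μ Δ_Lap f. -/
theorem commutator_lap_sct {d : ℕ} (Δ : ℝ) (μ : Fin d)
    (f : (Fin d → ℝ) → ℝ) (hf : ContDiff ℝ (⊤ : ℕ∞) f) (x : Fin d → ℝ) :
    lap (sctOp Δ μ f) x - sctOp Δ μ (lap f) x
      = 4 * (Δ - ((d : ℝ) - 2) / 2) * pd μ f x + 4 * x μ * lap f x := by
  -- abbreviations
  set g : (Fin d → ℝ) → ℝ := fun y => 2 * y μ with hg_def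
  set A : (Fin d → ℝ) → ℝ := fun y => ∑ ν, y ν * pd ν f y with hA_def
  set h : (Fin d → ℝ) → ℝ := fun y => A y + Δ * f y with hh_def
  set r2 : (Fin d → ℝ) → ℝ := fun y => ∑ ν, (y ν) ^ 2 with hr2_def
  -- smoothness
  have hA : ContDiff ℝ (⊤ : ℕ∞) A :=
    ContDiff.sum fun ν _ => (contDiff_coord ν).mul (contDiff_pd ν hf)
  have hg : ContDiff ℝ (⊤ : ℕ∞) g := contDiff_const.mul (contDiff_coord μ)
  have hh : ContDiff ℝ (⊤ : ℕ∞) h := hA.add (contDiff_const.mul hf)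
  have hr2 : ContDiff ℝ (⊤ : ℕ∞) r2 := ContDiff.sum fun ν _ => (contDiff_coord ν).pow 2
  have hP : ContDiff ℝ (⊤ : ℕ∞) (pd μ f) := contDiff_pd μ hf
  -- sctOp f as product combination
  have hsct : sctOp Δ μ f = fun y => g y * h y - r2 y * pd μ f y := rfl
  -- derivatives of g
  have pd_g : ∀ ρ : Fin d, pd ρ g = fun _ => 2 * if ρ = μ then (1:ℝ) else 0 := by
    intro ρ
    rw [hg_def, pd_const_mul (smooth_diff (contDiff_coord μ)), pd_coord]
  have lap_g : lap g x = 0 := by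
    rw [hg_def, lap_const_mul (contDiff_coord μ), lap_coord, mul_zero]
  -- derivatives of A
  have pd_A : ∀ (ρ : Fin d) (y : Fin d → ℝ),
      pd ρ A y = pd ρ f y + ∑ ν, y ν * pd ρ (pd ν f) y := by
    intro ρ y
    rw [hA_def, pd_sum Finset.univ
      (fun ν _ => (smooth_diff (contDiff_coord ν)).fun_mul (smooth_diff (contDiff_pd ν hf)))]
    have e1 : ∀ ν : Fin d, pd ρ (fun y => y ν * pd ν f y) y
        = (if ρ = ν then (1:ℝ) else 0) * pd ν f y + y ν * pd ρ (pd ν f) y := by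
      intro ν
      rw [pd_mul (smooth_diff (contDiff_coord ν)) (smooth_diff (contDiff_pd ν hf)), pd_coord]
    simp only [e1]
    rw [Finset.sum_add_distrib]
    congr 1
    simp
  have lap_A : lap A x = 2 * lap f x + ∑ ν, x ν * pd ν (lap f) x := by
    rw [hA_def, lap_sum Finset.univ
      (fun ν _ => (contDiff_coord ν).mul (contDiff_pd ν hf))]
    have e1 : ∀ ν : Fin d, lap (fun y => y ν * pd ν f y) x
        = 2 * pd ν (pd ν f) x + x ν * pd ν (lap f) x := by
      intro ν
      rw [lap_mul (contDiff_coord ν) (contDiff_pd ν hf), lap_coord, lap_pd_comm hf]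
      have e2 : (∑ ρ, pd ρ (fun y : Fin d → ℝ => y ν) x * pd ρ (pd ν f) x)
          = pd ν (pd ν f) x := by
        have e3 : ∀ ρ : Fin d, pd ρ (fun y : Fin d → ℝ => y ν) x
            = if ρ = ν then (1:ℝ) else 0 := fun ρ => by rw [pd_coord]
        simp only [e3]
        simp
      rw [e2]
      ring
    rw [Finset.sum_congr rfl (fun ν _ => e1 ν), Finset.sum_add_distrib, ← Finset.mul_sum]
    rfl
  -- derivatives of h
  have pd_h : ∀ ρ : Fin d, pd ρ h x = pd ρ A x + Δ * pd ρ f x := by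
    intro ρ
    rw [hh_def, pd_add (smooth_diff hA) ((differentiable_const Δ).fun_mul (smooth_diff hf)),
      pd_const_mul (smooth_diff hf)]
  have lap_h : lap h x = lap A x + Δ * lap f x := by
    rw [hh_def, lap_add hA (contDiff_const.mul hf), lap_const_mul hf]
  -- derivatives of r2
  have hr2m : r2 = fun y : Fin d → ℝ => ∑ ν, y ν * y ν := by
    funext y
    exact Finset.sum_congr rfl fun ν _ => sq (y ν)
  have pd_r2 : ∀ ρ : Fin d, pd ρ r2 = fun y => 2 * y ρ := by
    intro ρ
    rw [hr2m, pd_sum Finset.univ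
      (fun ν _ => (smooth_diff (contDiff_coord ν)).fun_mul (smooth_diff (contDiff_coord ν)))]
    funext y
    have e1 : ∀ ν : Fin d, pd ρ (fun y : Fin d → ℝ => y ν * y ν) y
        = (if ρ = ν then (1:ℝ) else 0) * y ν + y ν * (if ρ = ν then (1:ℝ) else 0) := by
      intro ν
      rw [pd_mul (smooth_diff (contDiff_coord ν)) (smooth_diff (contDiff_coord ν)), pd_coord]
    simp only [e1, ite_mul, mul_ite, one_mul, mul_one, zero_mul, mul_zero]
    rw [Finset.sum_add_distrib]
    simp
    ring
  have lap_r2 : lap r2 x = 2 * d := by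
    show (∑ ρ, pd ρ (pd ρ r2) x) = 2 * d
    have e1 : ∀ ρ : Fin d, pd ρ (pd ρ r2) x = 2 := by
      intro ρ
      rw [pd_r2 ρ, pd_const_mul (smooth_diff (contDiff_coord ρ)), pd_coord]
      simp
    rw [Finset.sum_congr rfl (fun ρ _ => e1 ρ), Finset.sum_const]
    simp [mul_comm]
  -- main expansion
  have expand : lap (sctOp Δ μ f) x
      = lap g x * h x + 2 * (∑ ρ, pd ρ g x * pd ρ h x) + g x * lap h x
        - (lap r2 x * pd μ f x + 2 * (∑ ρ, pd ρ r2 x * pd ρ (pd μ f) x)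
            + r2 x * lap (pd μ f) x) := by
    rw [hsct, lap_sub (hg.mul hh) (hr2.mul hP), lap_mul hg hh, lap_mul hr2 hP]
  have sum1 : (∑ ρ, pd ρ g x * pd ρ h x) = 2 * pd μ h x := by
    have e1 : ∀ ρ : Fin d, pd ρ g x * pd ρ h x
        = (if ρ = μ then (2:ℝ) else 0) * pd ρ h x := by
      intro ρ
      rw [pd_g ρ]
      split_ifs <;> ring
    simp only [e1]
    simp [Finset.sum_ite_eq]
  have sum2 : (∑ ρ, pd ρ r2 x * pd ρ (pd μ f) x) = 2 * ∑ ρ, x ρ * pd ρ (pd μ f) x := by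
    have e1 : ∀ ρ : Fin d, pd ρ r2 x * pd ρ (pd μ f) x = 2 * (x ρ * pd ρ (pd μ f) x) := by
      intro ρ
      rw [pd_r2 ρ]
      ring
    simp only [e1]
    rw [← Finset.mul_sum]
  have swap : (∑ ν, x ν * pd μ (pd ν f) x) = ∑ ρ, x ρ * pd ρ (pd μ f) x :=
    Finset.sum_congr rfl fun ν _ => by rw [pd_comm hf μ ν]
  have sctlap : sctOp Δ μ (lap f) x
      = 2 * x μ * ((∑ ν, x ν * pd ν (lap f) x) + Δ * lap f x)
        - r2 x * pd μ (lap f) x := rfl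
  rw [expand, sctlap, lap_g, lap_r2, sum1, sum2, lap_h, lap_A, pd_h, pd_A, swap,
    lap_pd_comm hf]
  have hval : h x = A x + Δ * f x := rfl
  have hgval : g x = 2 * x μ := rfl
  rw [hval, hgval]
  ring
end

section
/- Let U : ℝ^d × ℝ^d → ℝ be smooth of the form U(x,y) = u(|x−y|²) for smooth u : ℝ → ℝ, and suppose there exists smooth v : ℝ → ℝ with V(x,y) = v(|x−y|²) such that (x·∂_x + y·∂_y + 2Δ) U(x,y) = V(x,y) for all x,y. Then (2x_μ(x·∂_x + Δ) − |x|² ∂_{x,μ} + 2y_μ(y·∂_y + Δ) − |y|² ∂_{y,μ}) U(x,y) = (x+y)_μ V(x,y) for all x,y and all μ. -/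
open MeasureTheory

/-- x-partial derivative of a two-point kernel. -/
noncomputable def pdx {d : ℕ} (ν : Fin d) (U : (Fin d → ℝ) → (Fin d → ℝ) → ℝ)
    (x y : Fin d → ℝ) : ℝ :=
  fderiv ℝ (fun x' => U x' y) x (Pi.single ν 1)

/-- y-partial derivative of a two-point kernel. -/
noncomputable def pdy {d : ℕ} (ν : Fin d) (U : (Fin d → ℝ) → (Fin d → ℝ) → ℝ)
    (x y : Fin d → ℝ) : ℝ :=
  fderiv ℝ (fun y' => U x y') y (Pi.single ν 1)


lemma hasFDerivAt_sq_sum {d : ℕ} (c z : Fin d → ℝ) :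
    HasFDerivAt (fun z' : Fin d → ℝ => ∑ ν, (z' ν - c ν) ^ 2)
      (∑ ν, (2 * (z ν - c ν)) • (ContinuousLinearMap.proj ν : (Fin d → ℝ) →L[ℝ] ℝ)) z := by
  apply HasFDerivAt.fun_sum
  intro ν _
  have h : HasFDerivAt (fun z' : Fin d → ℝ => z' ν - c ν)
      (ContinuousLinearMap.proj ν : (Fin d → ℝ) →L[ℝ] ℝ) z :=
    ((ContinuousLinearMap.proj ν : (Fin d → ℝ) →L[ℝ] ℝ).hasFDerivAt).sub_const (c ν)
  have h2 := h.fun_mul h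
  simp only [pow_two]
  exact h2.congr_fderiv (by rw [two_mul, add_smul])

lemma sq_sum_deriv_apply {d : ℕ} (c z : Fin d → ℝ) (μ : Fin d) :
    (∑ ν, (2 * (z ν - c ν)) • (ContinuousLinearMap.proj ν : (Fin d → ℝ) →L[ℝ] ℝ))
      (Pi.single μ 1) = 2 * (z μ - c μ) := by
  simp [ContinuousLinearMap.sum_apply, Pi.single_apply]

lemma fderiv_u_sq_sum {d : ℕ} (u : ℝ → ℝ) (hu : ContDiff ℝ (⊤ : ℕ∞) u) (c z : Fin d → ℝ) (μ : Fin d) :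
    fderiv ℝ (fun z' : Fin d → ℝ => u (∑ ν, (z' ν - c ν) ^ 2)) z (Pi.single μ 1)
      = deriv u (∑ ν, (z ν - c ν) ^ 2) * (2 * (z μ - c μ)) := by
  have hg := hasFDerivAt_sq_sum c z
  have hud : HasDerivAt u (deriv u (∑ ν, (z ν - c ν) ^ 2)) (∑ ν, (z ν - c ν) ^ 2) :=
    (hu.differentiable (by simp) _).hasDerivAt
  have hc := hud.comp_hasFDerivAt z hg
  rw [show (fun z' : Fin d → ℝ => u (∑ ν, (z' ν - c ν) ^ 2))
      = u ∘ (fun z' : Fin d → ℝ => ∑ ν, (z' ν - c ν) ^ 2) from rfl, hc.fderiv]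
  simp only [ContinuousLinearMap.coe_smul', Pi.smul_apply, sq_sum_deriv_apply, smul_eq_mul]

/-- a translation/rotation-invariant kernel satisfying the dilatation
condition automatically satisfies the special conformal condition with
V_μ(x,y) = (x+y)_μ V(|x−y|²). -/
theorem sct_condition_of_dil_condition {d : ℕ} (Δ : ℝ) (u v : ℝ → ℝ)
    (hu : ContDiff ℝ (⊤ : ℕ∞) u) (hv : ContDiff ℝ (⊤ : ℕ∞) v)
    (U : (Fin d → ℝ) → (Fin d → ℝ) → ℝ)
    (hU : ∀ x y, U x y = u (∑ ν, (x ν - y ν) ^ 2))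
    (hdil : ∀ x y, (∑ ν, x ν * pdx ν U x y) + (∑ ν, y ν * pdy ν U x y) + 2 * Δ * U x y
      = v (∑ ν, (x ν - y ν) ^ 2)) :
    ∀ (x y : Fin d → ℝ) (μ : Fin d),
      (2 * x μ * ((∑ ν, x ν * pdx ν U x y) + Δ * U x y) - (∑ ν, (x ν) ^ 2) * pdx μ U x y)
        + (2 * y μ * ((∑ ν, y ν * pdy ν U x y) + Δ * U x y) - (∑ ν, (y ν) ^ 2) * pdy μ U x y)
      = (x μ + y μ) * v (∑ ν, (x ν - y ν) ^ 2) := by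
  intro x y μ
  set a : ℝ := deriv u (∑ ν, (x ν - y ν) ^ 2) with ha
  have hx : ∀ ν, pdx ν U x y = a * (2 * (x ν - y ν)) := by
    intro ν
    rw [pdx, show (fun x' => U x' y) = fun x' : Fin d → ℝ => u (∑ ν, (x' ν - y ν) ^ 2)
      from funext fun x' => hU x' y]
    exact fderiv_u_sq_sum u hu y x ν
  have hy : ∀ ν, pdy ν U x y = -(a * (2 * (x ν - y ν))) := by
    intro ν
    rw [pdy, show (fun y' => U x y') = fun y' : Fin d → ℝ => u (∑ ν, (y' ν - x ν) ^ 2)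
      from funext fun y' => by rw [hU]; congr 1; exact Finset.sum_congr rfl fun ν _ => by ring]
    rw [fderiv_u_sq_sum u hu x y ν]
    have hs : (∑ ν, (y ν - x ν) ^ 2) = ∑ ν, (x ν - y ν) ^ 2 :=
      Finset.sum_congr rfl fun ν _ => by ring
    rw [hs, ← ha]; ring
  have hdil' := hdil x y
  simp only [hx, hy, hU x y] at hdil' ⊢
  have key : (∑ ν, x ν * (a * (2 * (x ν - y ν)))) - (∑ ν, y ν * -(a * (2 * (x ν - y ν))))
      = 2 * a * ((∑ ν, (x ν) ^ 2) - (∑ ν, (y ν) ^ 2)) := by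
    rw [mul_sub, Finset.mul_sum, Finset.mul_sum, ← Finset.sum_sub_distrib,
      ← Finset.sum_sub_distrib]
    exact Finset.sum_congr rfl fun ν _ => by ring
  rw [← hdil']
  linear_combination (x μ - y μ) * key
end
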